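/- arXiv:1901.00185 — 2 statements merged into one kernel-verified Lean document; each statement's English description precedes it below -/
import Mathlib

section
/- Let P be a two-color grid poset with the max property and let L := J_color(P). Suppose L is M-structured for M = [[2,0],[0,2]]. Write (a,b) := wt(max). Then a ≥ 0 and b ≥ 0, the polynomial RGF(L,q) is symmetric and unimodal, and RGF(L,q)·(1−q)·(1−q) = (1−q^{a+1})(1−q^{b+1}) in ℤ[q]. -/
open scoped Classical

structure GridData (P : Type) [PartialOrder P] where
  m : ℕ
  chain : P → ℕ
  color : P → Fin 2

def IsIdeal {P : Type} [PartialOrder P] (t : Finset P) : Prop :=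
  ∀ ⦃x⦄, x ∈ t → ∀ ⦃y⦄, y ≤ x → y ∈ t

namespace GridData

variable {P : Type} [PartialOrder P] [Fintype P]

/-- The defining properties of a grid poset. -/
def IsGridPoset (G : GridData P) : Prop :=
  1 ≤ G.m ∧
  (∀ u : P, G.chain u ∈ Finset.Icc 1 G.m) ∧
  (∀ i ∈ Finset.Icc 1 G.m, ∃ u : P, G.chain u = i) ∧
  (∀ u v : P, G.chain u = G.chain v → u ≤ v ∨ v ≤ u) ∧
  (∀ u v : P, u ⋖ v → G.chain u = G.chain v ∨ G.chain u = G.chain v + 1)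

/-- The defining properties of a two-color grid poset. -/
def IsTwoColorGridPoset (G : GridData P) : Prop :=
  G.IsGridPoset ∧
  (∀ u v : P, G.chain u = G.chain v → G.color u = G.color v) ∧
  (∀ u v : P, Relation.ReflTransGen (fun x y : P => x ⋖ y ∨ y ⋖ x) u v →
    G.chain u = G.chain v + 1 → G.color u ≠ G.color v)

/-- The max property. -/
def MaxProperty (G : GridData P) : Prop :=
  (∀ u : P, IsMax u → G.chain u ≤ 2) ∧
  (∀ u v : P, IsMax u → IsMax v → u ≠ v → G.color u ≠ G.color v)

/-- The fiber `C i` of the chain function. -/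
def fiber (G : GridData P) (i : ℕ) : Finset P :=
  Finset.univ.filter (fun u => G.chain u = i)

/-- One step in a `γ`-component of `J_color(P)`: add or remove a single vertex of
color `γ` while both sets are order ideals. -/
def GStep (G : GridData P) (γ : Fin 2) (s t : Finset P) : Prop :=
  IsIdeal s ∧ IsIdeal t ∧ ∃ u : P, G.color u = γ ∧
    ((u ∉ s ∧ t = insert u s) ∨ (u ∉ t ∧ s = insert u t))

/-- The `γ`-component of `t` in `J_color(P)`. -/
def comp (G : GridData P) (γ : Fin 2) (t : Finset P) : Set (Finset P) :=
  {s | Relation.ReflTransGen (G.GStep γ) t s}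

noncomputable def minCard (G : GridData P) (γ : Fin 2) (t : Finset P) : ℕ :=
  sInf (Finset.card '' G.comp γ t)

noncomputable def maxCard (G : GridData P) (γ : Fin 2) (t : Finset P) : ℕ :=
  sSup (Finset.card '' G.comp γ t)

/-- `m_γ(t) = 2 ρ_γ(t) - l_γ(t)`. -/
noncomputable def mcoord (G : GridData P) (γ : Fin 2) (t : Finset P) : ℤ :=
  2 * ((t.card : ℤ) - (G.minCard γ t : ℤ)) - ((G.maxCard γ t : ℤ) - (G.minCard γ t : ℤ))

/-- The weight of an element of `J_color(P)` (color `0` is α, color `1` is β). -/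
noncomputable def wt (G : GridData P) (t : Finset P) : Fin 2 → ℤ :=
  ![G.mcoord 0 t, G.mcoord 1 t]

/-- `J_color(P)` is `M`-structured. -/
def MStructured (G : GridData P) (M : Matrix (Fin 2) (Fin 2) ℤ) : Prop :=
  ∀ s t : Finset P, IsIdeal s → IsIdeal t → ∀ u : P, u ∉ s → t = insert u s →
    G.wt s + M (G.color u) = G.wt t

end GridData

open Polynomial in
/-- The rank generating function of the lattice of order ideals of P. -/
noncomputable def RGF (P : Type) [PartialOrder P] [Fintype P] : Polynomial ℤ :=
  ∑ t ∈ Finset.univ.filter (fun t : Finset P => IsIdeal t), X ^ t.card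

/-- A polynomial `a_0 + a_1 q + ⋯ + a_l q^l` is symmetric if `a_i = a_{l-i}`. -/
def PolySymmetric (p : Polynomial ℤ) : Prop :=
  ∀ i ≤ p.natDegree, p.coeff i = p.coeff (p.natDegree - i)

/-- A polynomial is unimodal if its coefficients increase up to some index `k` and
decrease thereafter. -/
def PolyUnimodal (p : Polynomial ℤ) : Prop :=
  ∃ k, (∀ i j, i ≤ j → j ≤ k → p.coeff i ≤ p.coeff j) ∧
    (∀ i j, k ≤ i → i ≤ j → j ≤ p.natDegree → p.coeff j ≤ p.coeff i)

/-!
For an ideal `s`, the `γ`-component of `s` is the set of ideals between `compMin` (the down-closure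
of the non-`γ` part of `s`) and `compMax` (`s` together with every `γ`-vertex whose non-`γ`
predecessors all lie in `s`), so `m_γ(s) = 2|s| - |compMin| - |compMax|`. If `y ⋖ u` had different
colors, adding `u` to the ideal of elements below `u` would strictly lower the `color y`-coordinate
of the weight, whereas `M = 2·I` keeps it fixed. Hence colors, and then chain indices, are constant
along `≤`; with the max property each color class is a chain and a lower set. So `P` is the disjoint
union of two chains of lengths `a` and `b`, and `RGF(L) = [a+1]_q [b+1]_q`.
-/

open Finset Polynomial

section FinitePoset

variable {P : Type} [PartialOrder P]

lemma IsIdeal.inter {s t : Finset P} (hs : IsIdeal s) (ht : IsIdeal t) : IsIdeal (s ∩ t) :=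
  fun _ hx _ hy => mem_inter.mpr ⟨hs (mem_inter.mp hx).1 hy, ht (mem_inter.mp hx).2 hy⟩

lemma IsIdeal.union {s t : Finset P} (hs : IsIdeal s) (ht : IsIdeal t) : IsIdeal (s ∪ t) := by
  intro x hx y hy
  rcases mem_union.mp hx with hx | hx
  exacts [mem_union_left _ (hs hx hy), mem_union_right _ (ht hx hy)]

lemma IsIdeal.insert {s : Finset P} (hs : IsIdeal s) {u : P} (hu : ∀ y < u, y ∈ s) :
    IsIdeal (insert u s) := by
  intro x hx y hy
  rcases mem_insert.mp hx with rfl | hx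
  · rcases hy.eq_or_lt with rfl | hlt
    exacts [mem_insert_self _ _, mem_insert_of_mem (hu y hlt)]
  · exact mem_insert_of_mem (hs hx hy)

lemma isIdeal_filter_lt [Fintype P] (u : P) : IsIdeal (univ.filter (· < u)) := by
  intro x hx y hy
  simp only [mem_filter, mem_univ, true_and] at hx ⊢
  exact hy.trans_lt hx

lemma IsIdeal.erase_of_maximal {s : Finset P} (hs : IsIdeal s) {x : P} (hx : ∀ y ∈ s, ¬ x < y) :
    IsIdeal (s.erase x) := by
  intro c hc y hy
  refine mem_erase.mpr ⟨?_, hs (mem_of_mem_erase hc) hy⟩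
  rintro rfl
  exact hx c (mem_of_mem_erase hc) (hy.lt_of_ne (ne_of_mem_erase hc).symm)

lemma IsIdeal.exists_subset_card_eq {t : Finset P} (ht : IsIdeal t) {k : ℕ} (hk : k ≤ #t) :
    ∃ s ⊆ t, IsIdeal s ∧ #s = k := by
  obtain ⟨n, hn⟩ := Nat.exists_eq_add_of_le hk
  induction n generalizing t with
  | zero => exact ⟨t, Subset.rfl, ht, by omega⟩
  | succ n ih =>
    obtain ⟨x, hx⟩ := exists_maximal (card_pos.mp (by omega : 0 < #t))
    have hx' : ∀ y ∈ t, ¬ x < y := fun y hy hxy => hxy.not_ge (hx.2 hy hxy.le)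
    obtain ⟨s, hst, hs, hsk⟩ := ih (ht.erase_of_maximal hx')
      (by rw [card_erase_of_mem hx.1]; omega) (by rw [card_erase_of_mem hx.1]; omega)
    exact ⟨s, hst.trans (erase_subset _ _), hs, hsk⟩

lemma IsIdeal.eq_of_card_eq {C s t : Finset P} (hC : IsChain (· ≤ ·) (C : Set P))
    (hs : IsIdeal s) (ht : IsIdeal t) (hsC : s ⊆ C) (htC : t ⊆ C) (hst : #s = #t) : s = t := by
  have htotal : s ⊆ t ∨ t ⊆ s := by
    by_contra! h
    obtain ⟨⟨x, hxs, hxt⟩, ⟨y, hyt, hys⟩⟩ := And.intro (not_subset.mp h.1) (not_subset.mp h.2)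
    rcases hC.total (hsC hxs) (htC hyt) with hxy | hyx
    exacts [hxt (ht hyt hxy), hys (hs hxs hyx)]
  rcases htotal with h | h
  exacts [eq_of_subset_of_card_le h hst.ge, (eq_of_subset_of_card_le h hst.le).symm]

lemma eq_of_le_of_forall_covBy [Fintype P] {β : Type*} (f : P → β) (hf : ∀ a b, a ⋖ b → f a = f b)
    {x y : P} (h : x ≤ y) : f x = f y := by
  let _ := Fintype.toLocallyFiniteOrder (α := P)
  have hgen := le_iff_reflTransGen_covBy.mp h
  clear h
  induction hgen with
  | refl => rfl
  | tail _ hcov ih => exact ih.trans (hf _ _ hcov)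

lemma exists_le_isMax [Fintype P] (x : P) : ∃ m, x ≤ m ∧ IsMax m :=
  let ⟨m, hxm, hm⟩ := Finite.exists_le_maximal (p := fun _ : P => True) trivial
  ⟨m, hxm, fun _ hc => hm.2 trivial hc⟩

end FinitePoset

section GeomPoly

/-- The `q`-integer `[n+1]_q`. -/
noncomputable def geomPoly (n : ℕ) : ℤ[X] := ∑ k ∈ range (n + 1), X ^ k

lemma geomPoly_mul_one_sub (n : ℕ) : geomPoly n * (1 - X) = 1 - X ^ (n + 1) := by
  have h := geom_sum_mul (X : ℤ[X]) (n + 1)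
  rw [geomPoly]
  linear_combination -h

lemma coeff_geomPoly (n i : ℕ) : (geomPoly n).coeff i = if i ≤ n then 1 else 0 := by
  simp [geomPoly, coeff_X_pow]

lemma coeff_geomPoly_mul (a b i : ℕ) :
    (geomPoly a * geomPoly b).coeff i = ((min i a + 1 - (i - b) : ℕ) : ℤ) := by
  have hfilter : (range (i + 1)).filter (fun k => i - k ≤ b ∧ k ≤ a) = Icc (i - b) (min i a) := by
    ext k
    simp only [mem_filter, mem_range, mem_Icc]
    omega
  rw [coeff_mul, Nat.sum_antidiagonal_eq_sum_range_succ_mk]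
  simp only [coeff_geomPoly, mul_ite, mul_one, mul_zero, ← ite_and]
  rw [sum_boole, hfilter, Nat.card_Icc]

lemma natDegree_geomPoly_mul (a b : ℕ) : (geomPoly a * geomPoly b).natDegree = a + b := by
  refine natDegree_eq_of_le_of_coeff_ne_zero ?_ ?_
  · refine natDegree_le_iff_coeff_eq_zero.mpr fun N hN => ?_
    rw [coeff_geomPoly_mul]
    omega
  · rw [coeff_geomPoly_mul]
    omega

lemma polySymmetric_geomPoly_mul (a b : ℕ) : PolySymmetric (geomPoly a * geomPoly b) := by
  intro i hi
  rw [natDegree_geomPoly_mul] at hi ⊢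
  rw [coeff_geomPoly_mul, coeff_geomPoly_mul]
  congr 1
  omega

lemma polyUnimodal_geomPoly_mul (a b : ℕ) : PolyUnimodal (geomPoly a * geomPoly b) := by
  refine ⟨min a b, fun i j hij hj => ?_, fun i j hi hij hj => ?_⟩
  · rw [coeff_geomPoly_mul, coeff_geomPoly_mul]
    exact_mod_cast (by omega : min i a + 1 - (i - b) ≤ min j a + 1 - (j - b))
  · rw [natDegree_geomPoly_mul] at hj
    rw [coeff_geomPoly_mul, coeff_geomPoly_mul]
    exact_mod_cast (by omega : min j a + 1 - (j - b) ≤ min i a + 1 - (i - b))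

end GeomPoly

namespace GridData

variable {P : Type} [PartialOrder P] {G : GridData P}

lemma wt_apply (s : Finset P) (c : Fin 2) : G.wt s c = G.mcoord c s := by
  fin_cases c <;> rfl

lemma twiceIdentity_apply_of_ne {c d : Fin 2} (h : c ≠ d) :
    (!![2, 0; 0, 2] : Matrix (Fin 2) (Fin 2) ℤ) c d = 0 := by
  fin_cases c <;> fin_cases d <;> simp_all

section ComponentSteps

variable {γ : Fin 2}

lemma GStep.symm {s t : Finset P} (h : G.GStep γ s t) : G.GStep γ t s := by
  obtain ⟨hs, ht, u, hu, h | h⟩ := h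
  exacts [⟨ht, hs, u, hu, Or.inr h⟩, ⟨ht, hs, u, hu, Or.inl h⟩]

instance : Std.Symm (G.GStep γ) := ⟨fun _ _ => GStep.symm⟩

lemma isIdeal_of_mem_comp {s r : Finset P} (hs : IsIdeal s) (h : r ∈ G.comp γ s) : IsIdeal r := by
  induction h with
  | refl => exact hs
  | tail _ hstep _ => exact hstep.2.1

lemma filter_color_ne_eq_of_mem_comp {s r : Finset P} (h : r ∈ G.comp γ s) :
    r.filter (G.color · ≠ γ) = s.filter (G.color · ≠ γ) := by
  induction h with
  | refl => rfl
  | tail _ hstep ih =>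
    obtain ⟨-, -, u, hu, ⟨-, rfl⟩ | ⟨-, rfl⟩⟩ := hstep <;> simpa [filter_insert, hu] using ih

/-- Removing the `γ`-vertices of `s \ r` one maximal element at a time walks from `s` down to `r`
inside the `γ`-component. -/
lemma mem_comp_of_subset {r s : Finset P} (hr : IsIdeal r) (hs : IsIdeal s) (hrs : r ⊆ s)
    (hcol : ∀ x ∈ s, x ∉ r → G.color x = γ) : r ∈ G.comp γ s := by
  induction hn : #(s \ r) generalizing s with
  | zero =>
    rw [Subset.antisymm hrs (sdiff_eq_empty_iff_subset.mp (card_eq_zero.mp hn))]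
    exact .refl
  | succ n ih =>
    obtain ⟨x, hx⟩ := exists_maximal (card_pos.mp (by omega : 0 < #(s \ r)))
    obtain ⟨hxs, hxr⟩ := mem_sdiff.mp hx.1
    have hxmax : ∀ y ∈ s, ¬ x < y := fun y hy hxy => by
      by_cases hyr : y ∈ r
      · exact hxr (hr hyr hxy.le)
      · exact hxy.not_ge (hx.2 (mem_sdiff.mpr ⟨hy, hyr⟩) hxy.le)
    have hs' := hs.erase_of_maximal hxmax
    have hstep : G.GStep γ s (s.erase x) :=
      ⟨hs, hs', x, hcol x hxs hxr, Or.inr ⟨notMem_erase x s, (insert_erase hxs).symm⟩⟩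
    refine .head hstep (ih hs' (fun y hy => mem_erase.mpr ⟨?_, hrs hy⟩)
      (fun y hy => hcol y (mem_of_mem_erase hy)) ?_)
    · rintro rfl
      exact hxr hy
    · rw [erase_sdiff_comm, card_erase_of_mem hx.1, hn, Nat.add_sub_cancel]

end ComponentSteps

section Components

variable [Fintype P] {γ : Fin 2}

variable (G) in
noncomputable def compMin (γ : Fin 2) (s : Finset P) : Finset P :=
  univ.filter fun x => ∃ z ∈ s, G.color z ≠ γ ∧ x ≤ z

variable (G) in
noncomputable def compMax (γ : Fin 2) (s : Finset P) : Finset P :=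
  s ∪ univ.filter fun x => G.color x = γ ∧ ∀ y ≤ x, G.color y ≠ γ → y ∈ s

lemma mem_compMin {s : Finset P} {x : P} :
    x ∈ G.compMin γ s ↔ ∃ z ∈ s, G.color z ≠ γ ∧ x ≤ z := by
  simp [compMin]

lemma mem_compMax {s : Finset P} {x : P} :
    x ∈ G.compMax γ s ↔ x ∈ s ∨ G.color x = γ ∧ ∀ y ≤ x, G.color y ≠ γ → y ∈ s := by
  simp [compMax]

lemma isIdeal_compMin (s : Finset P) : IsIdeal (G.compMin γ s) := by
  intro x hx y hy
  obtain ⟨z, hz, hzc, hxz⟩ := mem_compMin.mp hx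
  exact mem_compMin.mpr ⟨z, hz, hzc, hy.trans hxz⟩

lemma compMin_subset {s : Finset P} (hs : IsIdeal s) : G.compMin γ s ⊆ s := by
  intro x hx
  obtain ⟨z, hz, -, hxz⟩ := mem_compMin.mp hx
  exact hs hz hxz

lemma compMin_mono {s t : Finset P} (h : s ⊆ t) : G.compMin γ s ⊆ G.compMin γ t := by
  intro x hx
  obtain ⟨z, hz, hzc, hxz⟩ := mem_compMin.mp hx
  exact mem_compMin.mpr ⟨z, h hz, hzc, hxz⟩

lemma isIdeal_compMax {s : Finset P} (hs : IsIdeal s) : IsIdeal (G.compMax γ s) := by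
  intro x hx y hy
  rcases mem_compMax.mp hx with hxs | ⟨-, hx⟩
  · exact mem_compMax.mpr (Or.inl (hs hxs hy))
  · by_cases hyc : G.color y = γ
    · exact mem_compMax.mpr (Or.inr ⟨hyc, fun z hz => hx z (hz.trans hy)⟩)
    · exact mem_compMax.mpr (Or.inl (hx y hy hyc))

lemma subset_compMax (s : Finset P) : s ⊆ G.compMax γ s := subset_union_left

lemma compMax_mono {s t : Finset P} (h : s ⊆ t) : G.compMax γ s ⊆ G.compMax γ t := by
  intro x hx
  rcases mem_compMax.mp hx with hxs | ⟨hxc, hx⟩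
  exacts [mem_compMax.mpr (Or.inl (h hxs)),
    mem_compMax.mpr (Or.inr ⟨hxc, fun y hy hyc => h (hx y hy hyc)⟩)]

lemma compMin_mem_comp {s : Finset P} (hs : IsIdeal s) : G.compMin γ s ∈ G.comp γ s := by
  refine mem_comp_of_subset (isIdeal_compMin s) hs (compMin_subset hs) fun x hxs hx => ?_
  by_contra hxc
  exact hx (mem_compMin.mpr ⟨x, hxs, hxc, le_rfl⟩)

lemma compMax_mem_comp {s : Finset P} (hs : IsIdeal s) : G.compMax γ s ∈ G.comp γ s := by
  refine Std.Symm.symm _ _ (mem_comp_of_subset hs (isIdeal_compMax hs) (subset_compMax s)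
    fun x hx hxs => ?_)
  rcases mem_compMax.mp hx with h | ⟨hxc, -⟩
  exacts [absurd h hxs, hxc]

lemma compMin_subset_of_mem_comp {s r : Finset P} (hs : IsIdeal s) (h : r ∈ G.comp γ s) :
    G.compMin γ s ⊆ r := by
  intro x hx
  obtain ⟨z, hz, hzc, hxz⟩ := mem_compMin.mp hx
  have hzr : z ∈ r.filter (G.color · ≠ γ) := by
    rw [filter_color_ne_eq_of_mem_comp h]
    exact mem_filter.mpr ⟨hz, hzc⟩
  exact isIdeal_of_mem_comp hs h (mem_filter.mp hzr).1 hxz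

lemma subset_compMax_of_mem_comp {s r : Finset P} (hs : IsIdeal s) (h : r ∈ G.comp γ s) :
    r ⊆ G.compMax γ s := by
  have hsame {y : P} (hyr : y ∈ r) (hyc : G.color y ≠ γ) : y ∈ s := by
    have hy : y ∈ r.filter (G.color · ≠ γ) := mem_filter.mpr ⟨hyr, hyc⟩
    rw [filter_color_ne_eq_of_mem_comp h] at hy
    exact (mem_filter.mp hy).1
  intro x hx
  by_cases hxc : G.color x = γ
  · exact mem_compMax.mpr (Or.inr ⟨hxc, fun y hy hyc => hsame (isIdeal_of_mem_comp hs h hx hy) hyc⟩)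
  · exact mem_compMax.mpr (Or.inl (hsame hx hxc))

lemma minCard_eq {s : Finset P} (hs : IsIdeal s) : G.minCard γ s = #(G.compMin γ s) :=
  IsLeast.csInf_eq ⟨⟨_, compMin_mem_comp hs, rfl⟩,
    by rintro _ ⟨r, hr, rfl⟩; exact card_le_card (compMin_subset_of_mem_comp hs hr)⟩

lemma maxCard_eq {s : Finset P} (hs : IsIdeal s) : G.maxCard γ s = #(G.compMax γ s) :=
  IsGreatest.csSup_eq ⟨⟨_, compMax_mem_comp hs, rfl⟩,
    by rintro _ ⟨r, hr, rfl⟩; exact card_le_card (subset_compMax_of_mem_comp hs hr)⟩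

lemma mcoord_eq {s : Finset P} (hs : IsIdeal s) :
    G.mcoord γ s = 2 * #s - #(G.compMin γ s) - #(G.compMax γ s) := by
  rw [mcoord, minCard_eq hs, maxCard_eq hs]
  ring

/-- Both `u` and `y` join `compMin` and `u` joins `compMax`, while `|s|` grows only by one. -/
lemma mcoord_insert_lt {s : Finset P} {u y : P} (hs : IsIdeal s) (ht : IsIdeal (insert u s))
    (hus : u ∉ s) (huc : G.color u ≠ γ) (hys : y ∈ s) (hyu : y ≤ u) (hy : y ∉ G.compMin γ s) :
    G.mcoord γ (insert u s) < G.mcoord γ s := by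
  have hmin : insert u (insert y (G.compMin γ s)) ⊆ G.compMin γ (insert u s) := by
    have hu : u ∈ G.compMin γ (insert u s) := mem_compMin.mpr ⟨u, mem_insert_self _ _, huc, le_rfl⟩
    refine insert_subset hu (insert_subset (isIdeal_compMin _ hu hyu) ?_)
    exact compMin_mono (subset_insert _ _)
  have hmax : insert u (G.compMax γ s) ⊆ G.compMax γ (insert u s) :=
    insert_subset (subset_compMax _ (mem_insert_self _ _)) (compMax_mono (subset_insert _ _))
  have huy : u ∉ insert y (G.compMin γ s) := by
    rw [mem_insert, not_or]
    exact ⟨fun h => hus (h ▸ hys), fun h => hus (compMin_subset hs h)⟩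
  have hu_max : u ∉ G.compMax γ s := by
    rw [mem_compMax, not_or]
    exact ⟨hus, fun h => huc h.1⟩
  have hcmin := card_le_card hmin
  have hcmax := card_le_card hmax
  rw [card_insert_of_notMem huy, card_insert_of_notMem hy] at hcmin
  rw [card_insert_of_notMem hu_max] at hcmax
  rw [mcoord_eq hs, mcoord_eq ht, card_insert_of_notMem hus]
  push_cast
  omega

end Components

section TwiceIdentity

variable [Fintype P]

lemma color_eq_of_covBy (hM : G.MStructured !![2, 0; 0, 2]) {y u : P} (h : y ⋖ u) :
    G.color y = G.color u := by
  by_contra hne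
  set s := univ.filter (· < u)
  have hs : IsIdeal s := isIdeal_filter_lt u
  have hus : u ∉ s := by simp [s]
  have hys : y ∈ s := by simp [s, h.lt]
  have ht : IsIdeal (insert u s) := hs.insert fun z hz => by simp [s, hz]
  have hfixed := congrFun (hM s _ hs ht u hus rfl) (G.color y)
  rw [Pi.add_apply, wt_apply, wt_apply, twiceIdentity_apply_of_ne (Ne.symm hne), add_zero] at hfixed
  have hy : y ∉ G.compMin (G.color y) s := by
    intro hy
    obtain ⟨z, hz, hzc, hyz⟩ := mem_compMin.mp hy
    rcases hyz.eq_or_lt with rfl | hyz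
    · exact hzc rfl
    · exact h.2 hyz (by simpa [s] using hz)
  exact (mcoord_insert_lt hs ht hus (Ne.symm hne) hys h.le hy).ne hfixed.symm

lemma color_eq_of_le (hM : G.MStructured !![2, 0; 0, 2]) {y u : P} (h : y ≤ u) :
    G.color y = G.color u :=
  eq_of_le_of_forall_covBy G.color (fun _ _ => color_eq_of_covBy hM) h

lemma chain_eq_of_le (hM : G.MStructured !![2, 0; 0, 2]) (hG : G.IsTwoColorGridPoset)
    {y u : P} (h : y ≤ u) : G.chain y = G.chain u := by
  obtain ⟨⟨-, -, -, -, hcovBy⟩, -, hcolor_ne⟩ := hG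
  refine eq_of_le_of_forall_covBy G.chain (fun a b hab => ?_) h
  refine (hcovBy a b hab).resolve_right fun hchain => ?_
  exact hcolor_ne a b (.single (Or.inl hab)) hchain (color_eq_of_le hM hab.le)

variable (G) in
noncomputable def colorClass (c : Fin 2) : Finset P := univ.filter (G.color · = c)

lemma mem_colorClass {c : Fin 2} {x : P} : x ∈ G.colorClass c ↔ G.color x = c := by
  simp [colorClass]

lemma isIdeal_colorClass (hM : G.MStructured !![2, 0; 0, 2]) (c : Fin 2) :
    IsIdeal (G.colorClass c) := fun _ hx _ hy =>
  mem_colorClass.mpr ((color_eq_of_le hM hy).trans (mem_colorClass.mp hx))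

/-- Two vertices of the same color lie below maximal elements of that color, which coincide by the
max property; chain indices are constant along `≤`, so both vertices lie on one chain. -/
lemma isChain_colorClass (hM : G.MStructured !![2, 0; 0, 2]) (hG : G.IsTwoColorGridPoset)
    (hmax : G.MaxProperty) (c : Fin 2) : IsChain (· ≤ ·) (G.colorClass c : Set P) := by
  intro x hx y hy _
  obtain ⟨mx, hxm, hmx⟩ := exists_le_isMax x
  obtain ⟨my, hym, hmy⟩ := exists_le_isMax y
  have hm : mx = my := by
    by_contra hne
    refine hmax.2 mx my hmx hmy hne ?_
    rw [← color_eq_of_le hM hxm, ← color_eq_of_le hM hym, mem_colorClass.mp hx,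
      mem_colorClass.mp hy]
  have hcomparable := hG.1.2.2.2.1
  refine hcomparable x y ?_
  rw [chain_eq_of_le hM hG hxm, chain_eq_of_le hM hG hym, hm]

lemma wt_univ (hM : G.MStructured !![2, 0; 0, 2]) (c : Fin 2) :
    G.wt univ c = #(G.colorClass c) := by
  have hmin : G.compMin c univ = univ.filter (G.color · ≠ c) := by
    ext x
    simp only [mem_compMin, mem_univ, true_and, mem_filter]
    refine ⟨fun ⟨z, hzc, hxz⟩ => color_eq_of_le hM hxz ▸ hzc, fun hx => ⟨x, hx, le_rfl⟩⟩
  have hmax : G.compMax c univ = univ := eq_univ_of_forall fun x => subset_compMax _ (mem_univ x)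
  have hsplit := card_filter_add_card_filter_not (s := univ) (G.color · = c)
  rw [wt_apply, mcoord_eq fun _ _ y _ => mem_univ y, hmin, hmax, colorClass]
  simp only [ne_eq] at hsplit ⊢
  omega

end TwiceIdentity

section RankGeneratingFunction

variable [Fintype P]

lemma disjoint_colorClass_zero_one : Disjoint (G.colorClass 0) (G.colorClass 1) :=
  disjoint_left.mpr fun x h0 h1 => by
    rw [mem_colorClass] at h0 h1
    exact absurd (h0.symm.trans h1) (by decide)

lemma colorClass_zero_union_one : G.colorClass 0 ∪ G.colorClass 1 = univ := by
  ext x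
  simp only [mem_union, mem_colorClass, mem_univ, iff_true]
  generalize G.color x = c
  fin_cases c <;> simp

lemma inter_colorClass_zero_union_one (t : Finset P) :
    t ∩ G.colorClass 0 ∪ t ∩ G.colorClass 1 = t := by
  rw [← inter_union_distrib_left, colorClass_zero_union_one, inter_univ]

/-- An ideal is recorded by the lengths of its initial segments in the two color chains. -/
lemma RGF_eq_geomPoly_mul (hM : G.MStructured !![2, 0; 0, 2]) (hG : G.IsTwoColorGridPoset)
    (hmax : G.MaxProperty) :
    RGF P = geomPoly #(G.colorClass 0) * geomPoly #(G.colorClass 1) := by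
  have hdisj (s t : Finset P) (hs : s ⊆ G.colorClass 0) (ht : t ⊆ G.colorClass 1) :
      Disjoint s t :=
    disjoint_colorClass_zero_one.mono hs ht
  have hideal (t : Finset P) (ht : IsIdeal t) (c : Fin 2) : IsIdeal (t ∩ G.colorClass c) :=
    ht.inter (isIdeal_colorClass hM c)
  have hunique (c : Fin 2) {s t : Finset P} (hs : IsIdeal s) (ht : IsIdeal t)
      (hst : #(s ∩ G.colorClass c) = #(t ∩ G.colorClass c)) :
      s ∩ G.colorClass c = t ∩ G.colorClass c :=
    IsIdeal.eq_of_card_eq (isChain_colorClass hM hG hmax c) (hideal s hs c) (hideal t ht c)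
      inter_subset_right inter_subset_right hst
  rw [RGF, geomPoly, geomPoly, sum_mul_sum, ← sum_product']
  refine sum_nbij (fun t => (#(t ∩ G.colorClass 0), #(t ∩ G.colorClass 1))) ?_ ?_ ?_ ?_
  · intro t _
    simp only [mem_product, mem_range, Nat.lt_succ_iff]
    exact ⟨card_le_card inter_subset_right, card_le_card inter_subset_right⟩
  · intro s hs t ht hst
    simp only [coe_filter, mem_univ, true_and, Set.mem_ofPred_eq, Prod.mk.injEq] at hs ht hst
    rw [← inter_colorClass_zero_union_one s, ← inter_colorClass_zero_union_one t,
      hunique 0 hs ht hst.1, hunique 1 hs ht hst.2]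
  · rintro ⟨k, l⟩ hkl
    simp only [coe_product, coe_range, Set.mem_prod, Set.mem_Iio] at hkl
    obtain ⟨s, hsC, hs, rfl⟩ := (isIdeal_colorClass hM 0).exists_subset_card_eq (k := k) (by omega)
    obtain ⟨t, htC, ht, rfl⟩ := (isIdeal_colorClass hM 1).exists_subset_card_eq (k := l) (by omega)
    refine ⟨s ∪ t, by simpa using hs.union ht, ?_⟩
    dsimp only
    rw [union_inter_distrib_right, union_inter_distrib_right, inter_eq_left.mpr hsC,
      inter_eq_left.mpr htC, disjoint_iff_inter_eq_empty.mp (hdisj _ _ Subset.rfl htC).symm,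
      disjoint_iff_inter_eq_empty.mp (hdisj _ _ hsC Subset.rfl), union_empty, empty_union]
  · intro t _
    rw [← pow_add, ← card_union_of_disjoint (hdisj _ _ inter_subset_right inter_subset_right),
      inter_colorClass_zero_union_one]

end RankGeneratingFunction

end GridData

open Polynomial in
theorem stmt_4 {P : Type} [PartialOrder P] [Fintype P] (G : GridData P)
    (hG : G.IsTwoColorGridPoset) (hmax : G.MaxProperty)
    (hM : G.MStructured !![2, 0; 0, 2])
    (a b : ℤ) (ha : a = G.wt Finset.univ 0) (hb : b = G.wt Finset.univ 1) :
    0 ≤ a ∧ 0 ≤ b ∧ PolySymmetric (RGF P) ∧ PolyUnimodal (RGF P) ∧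
      RGF P * ((1 : ℤ[X]) - X) * (1 - X) = ((1 : ℤ[X]) - X ^ (a + 1).toNat) * (1 - X ^ (b + 1).toNat) := by
  have ha' : a = #(G.colorClass 0) := ha.trans (GridData.wt_univ hM 0)
  have hb' : b = #(G.colorClass 1) := hb.trans (GridData.wt_univ hM 1)
  have hRGF := GridData.RGF_eq_geomPoly_mul hM hG hmax
  refine ⟨by omega, by omega, hRGF ▸ polySymmetric_geomPoly_mul _ _,
    hRGF ▸ polyUnimodal_geomPoly_mul _ _, ?_⟩
  rw [hRGF, show (a + 1).toNat = #(G.colorClass 0) + 1 by omega,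
    show (b + 1).toNat = #(G.colorClass 1) + 1 by omega, ← geomPoly_mul_one_sub,
    ← geomPoly_mul_one_sub]
  ring
end

section
/- Let P be a two-color grid poset with the max property, L := J_color(P), t ∈ L with t ≠ max, and γ := κ(t). If s ∈ comp_γ(t) with v(t) ∉ s (note that then s ≠ max), then κ(s) = γ. -/
open scoped Classical

namespace GridData

variable {P : Type} [PartialOrder P] [Fintype P]

/-- The indices `i ∈ {1,…,m}` of the fibers whose vertices have color `γ`. -/
def colorIdx (G : GridData P) (γ : Fin 2) : Finset ℕ :=
  (Finset.Icc 1 G.m).filter (fun i => ∃ u : P, G.chain u = i ∧ G.color u = γ)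

/-- `I_j`: the largest subset `I` of the fiber `C i` such that both `t ∪ I` and
`t \ I` are order ideals (realized as the union of all such subsets). -/
noncomputable def Imax (G : GridData P) (t : Finset P) (i : ℕ) : Finset P :=
  (G.fiber i).filter (fun x =>
    ∃ J ⊆ G.fiber i, x ∈ J ∧ IsIdeal (t ∪ J) ∧ IsIdeal (t \ J))

/-- The largest index `k ∈ {1,…,m}` such that the fiber `C k` is not contained in `t`. -/
noncomputable def kIdx (G : GridData P) (t : Finset P) : ℕ :=
  sSup {i | i ∈ Finset.Icc 1 G.m ∧ ¬ G.fiber i ⊆ t}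

/-- `z_i`, the maximal element of the (chain) fiber `C i`. -/
noncomputable def zEl [Nonempty P] (G : GridData P) (i : ℕ) : P :=
  if h : ∃ z ∈ G.fiber i, ∀ w ∈ G.fiber i, w ≤ z then h.choose else Classical.arbitrary P

/-- `v(t) := z_k` where `k` is the largest index with `C_k ⊄ t`. -/
noncomputable def vOf [Nonempty P] (G : GridData P) (t : Finset P) : P :=
  G.zEl (G.kIdx t)

/-- The vertex-coloring function `κ(t) := color(v(t))`. -/
noncomputable def kOf [Nonempty P] (G : GridData P) (t : Finset P) : Fin 2 :=
  G.color (G.vOf t)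

/-- A face of `comp_γ(t)` with respect to the isomorphism
`φ(s) = (s ∩ I_1, …, s ∩ I_k)`: for some color-`γ` fiber index `q`, the set of
elements of `comp_γ(t)` whose `q`-th coordinate `s ∩ I_q` is the maximal element
`I_q` of the chain `J(I_q)`. -/
def IsFace (G : GridData P) (γ : Fin 2) (t : Finset P) (S : Set (Finset P)) : Prop :=
  ∃ q ∈ G.colorIdx γ, S = {s | s ∈ G.comp γ t ∧ G.Imax t q ⊆ s}

/-- A sub-face of `comp_γ(t)`: the complement (within `comp_γ(t)`) of a face. -/
def IsSubFace (G : GridData P) (γ : Fin 2) (t : Finset P) (S : Set (Finset P)) : Prop :=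
  ∃ q ∈ G.colorIdx γ, S = {s | s ∈ G.comp γ t ∧ ¬ G.Imax t q ⊆ s}

end GridData

/-! A path in `comp_γ(t)` never adds or removes a vertex whose color is not `γ`, and colors are
constant on fibers. As `v(t) ∉ s`, the index `k(s)` is at least `k(t)`; if it is larger, the fiber
`C_{k(s)}` lies in `t` (by maximality of `k(t)`) but not in `s`, so its color is `γ`. -/

namespace GridData

section

variable {P : Type} [PartialOrder P] {G : GridData P}

lemma mem_iff_mem_of_mem_comp {γ : Fin 2} {t s : Finset P} (hs : s ∈ G.comp γ t) {u : P}
    (hu : G.color u ≠ γ) : u ∈ t ↔ u ∈ s := by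
  induction hs with
  | refl => rfl
  | tail _ hstep ih =>
    obtain ⟨-, -, w, hwγ, hcase⟩ := hstep
    have hne : u ≠ w := by rintro rfl; exact hu hwγ
    rcases hcase with ⟨-, rfl⟩ | ⟨-, rfl⟩
    · rw [ih, Finset.mem_insert, or_iff_right hne]
    · rw [ih, Finset.mem_insert, or_iff_right hne]

end

variable {P : Type} [PartialOrder P] [Fintype P] {G : GridData P}

lemma mem_fiber {i : ℕ} {x : P} : x ∈ G.fiber i ↔ G.chain x = i := by
  simp [fiber]

lemma exists_isGreatest_fiber (hG : G.IsGridPoset) {i : ℕ} (hne : (G.fiber i).Nonempty) :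
    ∃ z ∈ G.fiber i, ∀ w ∈ G.fiber i, w ≤ z := by
  obtain ⟨z, hz⟩ := Finset.exists_maximal hne
  refine ⟨z, hz.prop, fun w hw => ?_⟩
  rcases hG.2.2.2.1 w z (by rw [mem_fiber.mp hz.prop, mem_fiber.mp hw]) with h | h
  · exact h
  · exact (hz.eq_of_le hw h).ge

lemma zEl_mem_fiber [Nonempty P] (hG : G.IsGridPoset) {i : ℕ} (hne : (G.fiber i).Nonempty) :
    G.zEl i ∈ G.fiber i := by
  have h := exists_isGreatest_fiber hG hne
  rw [zEl, dif_pos h]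
  exact h.choose_spec.1

lemma color_zEl [Nonempty P] (hG : G.IsGridPoset)
    (hcolor : ∀ u v : P, G.chain u = G.chain v → G.color u = G.color v)
    {i : ℕ} {u : P} (hu : u ∈ G.fiber i) : G.color (G.zEl i) = G.color u :=
  hcolor _ _ <| by rw [mem_fiber.mp (zEl_mem_fiber hG ⟨u, hu⟩), mem_fiber.mp hu]

lemma bddAbove_setOf_not_fiber_subset (t : Finset P) :
    BddAbove {i | i ∈ Finset.Icc 1 G.m ∧ ¬ G.fiber i ⊆ t} :=
  ⟨G.m, fun _ hi => (Finset.mem_Icc.mp hi.1).2⟩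

lemma le_kIdx {t : Finset P} {i : ℕ} (hi : i ∈ Finset.Icc 1 G.m) (hsub : ¬ G.fiber i ⊆ t) :
    i ≤ G.kIdx t :=
  le_csSup (bddAbove_setOf_not_fiber_subset t) ⟨hi, hsub⟩

lemma kIdx_mem (hG : G.IsGridPoset) {t : Finset P} (htop : t ≠ Finset.univ) :
    G.kIdx t ∈ Finset.Icc 1 G.m ∧ ¬ G.fiber (G.kIdx t) ⊆ t := by
  obtain ⟨u, hu⟩ : ∃ u, u ∉ t := by simpa [Finset.eq_univ_iff_forall] using htop
  exact Nat.sSup_mem (s := {i | i ∈ Finset.Icc 1 G.m ∧ ¬ G.fiber i ⊆ t})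
    ⟨G.chain u, hG.2.1 u, fun hsub => hu (hsub (mem_fiber.mpr rfl))⟩
    (bddAbove_setOf_not_fiber_subset t)

lemma fiber_subset_of_kIdx_lt {t : Finset P} {i : ℕ} (hi : i ∈ Finset.Icc 1 G.m)
    (hlt : G.kIdx t < i) : G.fiber i ⊆ t := by
  by_contra hsub
  exact hlt.not_ge (le_kIdx hi hsub)

lemma vOf_mem_fiber_kIdx [Nonempty P] (hG : G.IsGridPoset) {t : Finset P}
    (htop : t ≠ Finset.univ) : G.vOf t ∈ G.fiber (G.kIdx t) :=
  zEl_mem_fiber hG ((Finset.not_subset.mp (kIdx_mem hG htop).2).imp fun _ h => h.1)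

end GridData

open GridData in
theorem stmt_17_general {P : Type} [PartialOrder P] [Fintype P] [Nonempty P] (G : GridData P)
    (hG : G.IsTwoColorGridPoset)
    (t : Finset P) (htop : t ≠ Finset.univ)
    (γ : Fin 2) (hγ : γ = G.kOf t)
    (s : Finset P) (hs : s ∈ G.comp γ t) (hv : G.vOf t ∉ s) :
    G.kOf s = γ := by
  obtain ⟨hGrid, hcolor, -⟩ := hG
  have hvt := vOf_mem_fiber_kIdx hGrid htop
  have hstop : s ≠ Finset.univ := by rintro rfl; exact hv (Finset.mem_univ _)
  obtain ⟨hk's, hfk's⟩ := kIdx_mem hGrid hstop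
  rcases (le_kIdx (kIdx_mem hGrid htop).1 fun h => hv (h hvt)).eq_or_lt with heq | hlt
  · rw [hγ, kOf, kOf, vOf, vOf, heq]
  · obtain ⟨u, hu, hus⟩ := Finset.not_subset.mp hfk's
    have hcu : G.color u = γ := by
      by_contra hne
      exact hus ((mem_iff_mem_of_mem_comp hs hne).mp (fiber_subset_of_kIdx_lt hk's hlt hu))
    rw [kOf, vOf, color_zEl hGrid hcolor hu, hcu]

/-- If `P` has the max property, `t ≠ max`, `γ = κ(t)`, and `s ∈ comp_γ(t)` with
`v(t) ∉ s` (so that `s ≠ max`), then `κ(s) = γ`. -/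
theorem stmt_17 {P : Type} [PartialOrder P] [Fintype P] [Nonempty P] (G : GridData P)
    (hG : G.IsTwoColorGridPoset) (hmax : G.MaxProperty)
    (t : Finset P) (ht : IsIdeal t) (htop : t ≠ Finset.univ)
    (γ : Fin 2) (hγ : γ = G.kOf t)
    (s : Finset P) (hs : s ∈ G.comp γ t) (hv : G.vOf t ∉ s) :
    G.kOf s = γ :=
  stmt_17_general G hG t htop γ hγ s hs hv
end
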